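/- Let Γ' be a finite connected metric graph obtained from a finite connected metric graph Γ by adding extra vertices and edges (so Γ is an isometrically embedded subgraph of Γ'). If the first Betti numbers satisfy b₁(Γ') = b₁(Γ), then for any two points x, y of Γ, every shortest path from x to y in Γ' is contained in Γ; in particular the shortest-path distance in Γ' between points of Γ equals the shortest-path distance in Γ. -/

import Mathlib

/-!
Since `#E' - #V' = #Es - #Vs`, the graph `Γ'` has exactly as many edges outside `Γ` as vertices
outside `Γ`. As `Γ'` is connected, double counting edge ends produces a vertex outside `Γ` with a
single edge; removing both keeps the count and the connectivity, so `Γ'` is `Γ` with trees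
attached. A trail (a walk with no repeated edge) between points of `Γ` cannot enter such a tree,
and with positive lengths every shortest walk is a trail.
-/

/-- `IsWalk ends u l v` : the list of edges `l` is a walk from `u` to `v` (edges may be
traversed in either direction) in the multigraph with endpoint map `ends`. -/
inductive IsWalk {V E : Type*} (ends : E → V × V) : V → List E → V → Prop
  | nil (v : V) : IsWalk ends v [] v
  | cons {u w v : V} (e : E) {l : List E} :
      (ends e = (u, w) ∨ ends e = (w, u)) → IsWalk ends w l v → IsWalk ends u (e :: l) v

/-- The total length of a walk. -/
def walkCost {E : Type*} (ℓ : E → ℝ) (l : List E) : ℝ := (l.map ℓ).sum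

open Finset

section Walks

variable {V E : Type*} {ends : E → V × V}

lemma incident_iff_of_step {e : E} {u w v : V} (h : ends e = (u, w) ∨ ends e = (w, u)) :
    ((ends e).1 = v ∨ (ends e).2 = v) ↔ (u = v ∨ w = v) := by
  rcases h with h | h <;> simp [h, or_comm]

lemma eq_or_eq_of_step {e : E} {u w c d : V} (h : ends e = (u, w) ∨ ends e = (w, u))
    (h' : ends e = (c, d) ∨ ends e = (d, c)) : u = c ∨ u = d := by
  rcases h with h | h <;> rcases h' with h' | h' <;> simp_all

namespace IsWalk

lemma append_split {u v : V} {a b : List E} (h : IsWalk ends u (a ++ b) v) :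
    ∃ m, IsWalk ends u a m ∧ IsWalk ends m b v := by
  induction a generalizing u with
  | nil => exact ⟨u, nil u, h⟩
  | cons e a ih =>
    cases h with
    | cons _ he h' =>
      obtain ⟨m, ha, hb⟩ := ih h'
      exact ⟨m, cons e he ha, hb⟩

/-- Cutting out the closed sub-walk between two traversals of an edge. -/
lemma exists_nodup_sublist {u v : V} {l : List E} (h : IsWalk ends u l v) :
    ∃ l', l'.Sublist l ∧ l'.Nodup ∧ IsWalk ends u l' v := by
  induction h with
  | nil v => exact ⟨[], List.Sublist.slnil, List.nodup_nil, nil v⟩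
  | @cons u w v e l he _ ih =>
    obtain ⟨l', hsub, hnd, hw⟩ := ih
    by_cases hel : e ∈ l'
    · obtain ⟨q, r, rfl⟩ := List.append_of_mem hel
      obtain ⟨c, -, hcr⟩ := hw.append_split
      have hr : (e :: r).Sublist (e :: l) :=
        ((List.sublist_append_right q _).trans hsub).cons e
      have hr_nd : (e :: r).Nodup := hnd.sublist (List.sublist_append_right q _)
      cases hcr with
      | @cons _ d _ _ _ hcd hdr =>
        rcases eq_or_eq_of_step he hcd with rfl | rfl
        · exact ⟨e :: r, hr, hr_nd, cons e hcd hdr⟩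
        · exact ⟨r, (List.sublist_cons_self e r).trans hr, hr_nd.of_cons, hdr⟩
    · exact ⟨e :: l', hsub.cons_cons e, List.nodup_cons.mpr ⟨hel, hnd⟩, cons e he hw⟩

lemma exists_incident_of_ne {u v : V} {l : List E} (h : IsWalk ends u l v) (huv : u ≠ v) :
    ∃ f ∈ l, (ends f).1 = v ∨ (ends f).2 = v := by
  induction h with
  | nil v => exact absurd rfl huv
  | @cons u w v f l hf _ ih =>
    by_cases hwv : w = v
    · exact ⟨f, List.mem_cons_self, (incident_iff_of_step hf).mpr (Or.inr hwv)⟩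
    · obtain ⟨g, hg, hgv⟩ := ih hwv
      exact ⟨g, List.mem_cons_of_mem f hg, hgv⟩

lemma mem_of_forall_mem_iff {S : Set V} {u v : V} {l : List E} (h : IsWalk ends u l v)
    (hS : ∀ e ∈ l, (ends e).1 ∈ S ↔ (ends e).2 ∈ S) (hu : u ∈ S) : v ∈ S := by
  induction h with
  | nil v => exact hu
  | @cons u w v e l he _ ih =>
    refine ih (fun f hf => hS f (List.mem_cons_of_mem e hf)) ?_
    have := hS e List.mem_cons_self
    rcases he with he | he <;> simp_all

/-- A trail passing through `v` enters and leaves it by two different edges. -/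
lemma notMem_of_unique_incident {u y v : V} {e : E} {l : List E} (h : IsWalk ends u l y)
    (hnd : l.Nodup) (hu : u ≠ v) (hy : y ≠ v) (he : (ends e).1 = v ∨ (ends e).2 = v)
    (huniq : ∀ f ∈ l, (ends f).1 = v ∨ (ends f).2 = v → f = e) : e ∉ l := by
  induction h with
  | nil => simp
  | @cons u m y f t hf ht ih =>
    have hm : m ≠ v := by
      rintro rfl
      cases ht with
      | nil => exact hy rfl
      | cons g hg _ =>
        have hfe := huniq f List.mem_cons_self ((incident_iff_of_step hf).mpr (Or.inr rfl))
        have hge := huniq g (by simp) ((incident_iff_of_step hg).mpr (Or.inl rfl))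
        exact (List.nodup_cons.mp hnd).1 (by simp [hfe, hge])
    have hfe : f ≠ e := by
      rintro rfl
      rcases (incident_iff_of_step hf).mp he with h | h
      exacts [hu h, hm h]
    rw [List.mem_cons, not_or]
    exact ⟨hfe.symm, ih hnd.of_cons hm hy fun g hg => huniq g (List.mem_cons_of_mem f hg)⟩

end IsWalk

end Walks

section Cost

variable {E : Type*} {ℓ : E → ℝ}

lemma walkCost_le_of_sublist (hℓ : ∀ e, 0 ≤ ℓ e) {l' l : List E} (h : l'.Sublist l) :
    walkCost ℓ l' ≤ walkCost ℓ l :=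
  (h.map ℓ).sum_le_sum (by simpa using fun e _ => hℓ e)

lemma walkCost_lt_of_sublist (hℓ : ∀ e, 0 < ℓ e) {l' l : List E} (h : l'.Sublist l)
    (hne : l' ≠ l) : walkCost ℓ l' < walkCost ℓ l := by
  obtain ⟨d, hd⟩ := h.exists_perm_append
  have hd_ne : d ≠ [] := by
    rintro rfl
    exact hne (h.eq_of_length (by simpa using hd.length_eq.symm))
  have hd_pos : 0 < walkCost ℓ d :=
    List.sum_pos _ (by simpa using fun e _ => hℓ e) (by simpa using hd_ne)
  have hsplit : walkCost ℓ l = walkCost ℓ l' + walkCost ℓ d := by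
    simp [walkCost, (hd.map ℓ).sum_eq]
  linarith

variable {V : Type*} {ends : E → V × V} {x y : V}

lemma IsWalk.nodup_of_forall_walkCost_le (hℓ : ∀ e, 0 < ℓ e) {l : List E}
    (h : IsWalk ends x l y) (hmin : ∀ l', IsWalk ends x l' y → walkCost ℓ l ≤ walkCost ℓ l') :
    l.Nodup := by
  by_contra hnd
  obtain ⟨l', hsub, hnd', hw'⟩ := h.exists_nodup_sublist
  have hne : l' ≠ l := fun h' => hnd (h' ▸ hnd')
  exact (walkCost_lt_of_sublist hℓ hsub hne).not_ge (hmin l' hw')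

lemma IsWalk.exists_forall_walkCost_le [Fintype E] (hℓ : ∀ e, 0 ≤ ℓ e) {l : List E}
    (h : IsWalk ends x l y) :
    ∃ m, IsWalk ends x m y ∧ ∀ l', IsWalk ends x l' y → walkCost ℓ m ≤ walkCost ℓ l' := by
  have hfin : {l : List E | IsWalk ends x l y ∧ l.Nodup}.Finite :=
    (List.finite_length_le E (Fintype.card E)).subset fun l hl => hl.2.length_le_card
  obtain ⟨l₀, -, hnd₀, hw₀⟩ := h.exists_nodup_sublist
  obtain ⟨m, ⟨hm, -⟩, hmin⟩ := Set.exists_min_image _ (walkCost ℓ) hfin ⟨l₀, hw₀, hnd₀⟩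
  refine ⟨m, hm, fun l' hl' => ?_⟩
  obtain ⟨l'', hsub, hnd'', hw''⟩ := hl'.exists_nodup_sublist
  exact (hmin l'' ⟨hw'', hnd''⟩).trans (walkCost_le_of_sublist hℓ hsub)

end Cost

section Pendant

variable {V E : Type*} {ends : E → V × V}

/-- Double counting: the ends of edges of `F` lying in `Out` number at least `2 * #Out`, which is
at least `2 * #F`. -/
lemma ends_mem_of_card_le_of_two_le_degree [DecidableEq V] {Out : Finset V} {F : Finset E}
    (hcard : #F ≤ #Out)
    (hdeg : ∀ v ∈ Out, 2 ≤ #{f ∈ F | (ends f).1 = v ∨ (ends f).2 = v}) :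
    ∀ f ∈ F, (ends f).1 ∈ Out ∧ (ends f).2 ∈ Out := by
  have hsum : 2 * #Out ≤ #{f ∈ F | (ends f).1 ∈ Out} + #{f ∈ F | (ends f).2 ∈ Out} := by
    rw [← sum_card_fiberwise_eq_card_filter, ← sum_card_fiberwise_eq_card_filter,
      ← sum_add_distrib, mul_comm, ← smul_eq_mul, ← sum_const]
    refine sum_le_sum fun v hv => (hdeg v hv).trans ?_
    classical
    rw [filter_or]
    exact card_union_le _ _
  have h₁ := card_filter_le F fun f => (ends f).1 ∈ Out
  have h₂ := card_filter_le F fun f => (ends f).2 ∈ Out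
  have e₁ : #{f ∈ F | (ends f).1 ∈ Out} = #F := by omega
  have e₂ : #{f ∈ F | (ends f).2 ∈ Out} = #F := by omega
  exact fun f hf => ⟨card_filter_eq_iff.mp e₁ f hf, card_filter_eq_iff.mp e₂ f hf⟩

variable {Vs : Set V} {Es : Set E}

lemma not_incident_of_mem (hends : ∀ e ∈ Es, (ends e).1 ∈ Vs ∧ (ends e).2 ∈ Vs) {f : E}
    (hf : f ∈ Es) {v : V} (hv : v ∉ Vs) : ¬((ends f).1 = v ∨ (ends f).2 = v) := by
  rintro (h | h)
  exacts [hv (h ▸ (hends f hf).1), hv (h ▸ (hends f hf).2)]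

/-- Were no vertex of `Out` pendant, each would have degree at least two; double counting would
then keep every edge of `F` inside `Out`, making `Out` unreachable from `Vs`. -/
lemma exists_pendant [DecidableEq V] (hends : ∀ e ∈ Es, (ends e).1 ∈ Vs ∧ (ends e).2 ∈ Vs)
    {Out : Finset V} {F : Finset E} (hOut : ∀ v ∈ Out, v ∉ Vs) (hcard : #F ≤ #Out)
    (hreach : ∀ v ∈ Out, ∃ u ∈ Vs, ∃ l, IsWalk ends u l v ∧ ∀ e ∈ l, e ∈ Es ∨ e ∈ F)
    (hne : Out.Nonempty) :
    ∃ v ∈ Out, ∃ e ∈ F, ((ends e).1 = v ∨ (ends e).2 = v) ∧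
      ∀ f ∈ F, (ends f).1 = v ∨ (ends f).2 = v → f = e := by
  have hinc : ∀ v ∈ Out, ∃ e ∈ F, (ends e).1 = v ∨ (ends e).2 = v := by
    intro v hv
    obtain ⟨u, hu, l, hl, hlE⟩ := hreach v hv
    obtain ⟨e, hel, he⟩ := hl.exists_incident_of_ne fun h => hOut v hv (h ▸ hu)
    refine ⟨e, (hlE e hel).resolve_left fun heEs => ?_, he⟩
    exact not_incident_of_mem hends heEs (hOut v hv) he
  by_contra! hno
  have hdeg : ∀ v ∈ Out, 2 ≤ #{f ∈ F | (ends f).1 = v ∨ (ends f).2 = v} := by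
    intro v hv
    obtain ⟨e, heF, he⟩ := hinc v hv
    obtain ⟨f, hfF, hf, hfe⟩ := hno v hv e heF he
    exact one_lt_card.mpr ⟨f, by simp [hfF, hf], e, by simp [heF, he], hfe⟩
  have hinside := ends_mem_of_card_le_of_two_le_degree hcard hdeg
  obtain ⟨v, hv⟩ := hne
  obtain ⟨u, hu, l, hl, hlE⟩ := hreach v hv
  refine hOut v hv (hl.mem_of_forall_mem_iff (fun e he => ?_) hu)
  rcases hlE e he with heEs | heF
  · exact iff_of_true (hends e heEs).1 (hends e heEs).2
  · exact iff_of_false (hOut _ (hinside e heF).1) (hOut _ (hinside e heF).2)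

end Pendant

section Trails

variable {V E : Type*} {ends : E → V × V} {Vs : Set V} {Es : Set E}

lemma IsWalk.forall_mem_erase_of_pendant [DecidableEq E]
    (hends : ∀ e ∈ Es, (ends e).1 ∈ Vs ∧ (ends e).2 ∈ Vs) {F : Finset E} {v : V} {e : E}
    (hv : v ∉ Vs) (he : (ends e).1 = v ∨ (ends e).2 = v)
    (huniq : ∀ f ∈ F, (ends f).1 = v ∨ (ends f).2 = v → f = e)
    {u w : V} {l : List E} (hl : IsWalk ends u l w) (hnd : l.Nodup) (hu : u ≠ v) (hw : w ≠ v)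
    (hlE : ∀ f ∈ l, f ∈ Es ∨ f ∈ F) : ∀ f ∈ l, f ∈ Es ∨ f ∈ F.erase e := by
  have hel : e ∉ l := hl.notMem_of_unique_incident hnd hu hw he fun f hf hfv =>
    (hlE f hf).elim (fun hfEs => absurd hfv (not_incident_of_mem hends hfEs hv))
      (huniq f · hfv)
  intro f hf
  exact (hlE f hf).imp_right fun hfF => mem_erase.mpr ⟨fun h => hel (h ▸ hf), hfF⟩

/-- Strip a pendant vertex of `Out` together with its edge, which the trail avoids, and induct. -/
theorem IsWalk.forall_mem_of_nodup_of_card_le [DecidableEq V] [DecidableEq E]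
    (hends : ∀ e ∈ Es, (ends e).1 ∈ Vs ∧ (ends e).2 ∈ Vs) (Out : Finset V) (F : Finset E)
    (hOut : ∀ v ∈ Out, v ∉ Vs) (hcard : #F ≤ #Out)
    (hreach : ∀ v ∈ Out, ∃ u ∈ Vs, ∃ l, IsWalk ends u l v ∧ ∀ e ∈ l, e ∈ Es ∨ e ∈ F)
    {x y : V} (hx : x ∈ Vs) (hy : y ∈ Vs) {l : List E} (hl : IsWalk ends x l y) (hnd : l.Nodup)
    (hlE : ∀ e ∈ l, e ∈ Es ∨ e ∈ F) : ∀ e ∈ l, e ∈ Es := by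
  induction Out using Finset.strongInduction generalizing F with
  | H Out ih =>
    rcases Out.eq_empty_or_nonempty with rfl | hne
    · obtain rfl : F = ∅ := card_eq_zero.mp (Nat.le_zero.mp hcard)
      simpa using hlE
    obtain ⟨v, hv, e, heF, he, huniq⟩ := exists_pendant hends hOut hcard hreach hne
    have hvVs := hOut v hv
    have hlE' := hl.forall_mem_erase_of_pendant hends hvVs he huniq hnd
      (fun h => hvVs (h ▸ hx)) (fun h => hvVs (h ▸ hy)) hlE
    refine ih (Out.erase v) (erase_ssubset hv) (F.erase e)
      (fun w hw => hOut w (mem_of_mem_erase hw)) ?_ ?_ hlE'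
    · rw [card_erase_of_mem heF, card_erase_of_mem hv]
      omega
    · intro w hw
      obtain ⟨u, hu, l', hl', hl'E⟩ := hreach w (mem_of_mem_erase hw)
      obtain ⟨l'', hsub, hnd'', hl''⟩ := hl'.exists_nodup_sublist
      exact ⟨u, hu, l'', hl'', hl''.forall_mem_erase_of_pendant hends hvVs he huniq hnd''
        (fun h => hvVs (h ▸ hu)) (ne_of_mem_erase hw) fun f hf => hl'E f (hsub.subset hf)⟩

end Trails

theorem subgraph_same_betti_isometric_general {V' E' : Type*} [Fintype V'] [Fintype E']
    (ends : E' → V' × V') (ℓ : E' → ℝ) (hpos : ∀ e, 0 < ℓ e)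
    (Vs : Set V') (Es : Set E')
    (hends : ∀ e ∈ Es, (ends e).1 ∈ Vs ∧ (ends e).2 ∈ Vs)
    (hconn' : ∀ u v : V', ∃ l, IsWalk ends u l v)
    (hbetti : (Fintype.card E' : ℤ) - Fintype.card V' = (Es.ncard : ℤ) - Vs.ncard) :
    ∀ x ∈ Vs, ∀ y ∈ Vs,
      (∀ l, IsWalk ends x l y →
        (∀ l', IsWalk ends x l' y → walkCost ℓ l ≤ walkCost ℓ l') →
        ∀ e ∈ l, e ∈ Es) ∧
      sInf {c | ∃ l, IsWalk ends x l y ∧ walkCost ℓ l = c}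
        = sInf {c | ∃ l, (IsWalk ends x l y ∧ ∀ e ∈ l, e ∈ Es) ∧ walkCost ℓ l = c} := by
  classical
  intro x hx y hy
  have hcard : #Es.toFinsetᶜ ≤ #Vs.toFinsetᶜ := by
    have := card_compl_add_card Es.toFinset
    have := card_compl_add_card Vs.toFinset
    rw [Set.ncard_eq_toFinset_card', Set.ncard_eq_toFinset_card'] at hbetti
    omega
  have hshortest : ∀ l, IsWalk ends x l y →
      (∀ l', IsWalk ends x l' y → walkCost ℓ l ≤ walkCost ℓ l') → ∀ e ∈ l, e ∈ Es :=
    fun l hl hmin => hl.forall_mem_of_nodup_of_card_le hends Vs.toFinsetᶜ Es.toFinsetᶜ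
      (by simp) hcard (fun v _ => ⟨x, hx, hconn' x v |>.imp fun l hl => ⟨hl, by simp [em]⟩⟩)
      hx hy (hl.nodup_of_forall_walkCost_le hpos hmin) (by simp [em])
  obtain ⟨l₀, hl₀⟩ := hconn' x y
  obtain ⟨m, hm, hmin⟩ := hl₀.exists_forall_walkCost_le fun e => (hpos e).le
  refine ⟨hshortest, ?_⟩
  have hA : IsLeast {c | ∃ l, IsWalk ends x l y ∧ walkCost ℓ l = c} (walkCost ℓ m) :=
    ⟨⟨m, hm, rfl⟩, by rintro _ ⟨l, hl, rfl⟩; exact hmin l hl⟩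
  have hB : IsLeast {c | ∃ l, (IsWalk ends x l y ∧ ∀ e ∈ l, e ∈ Es) ∧ walkCost ℓ l = c}
      (walkCost ℓ m) :=
    ⟨⟨m, ⟨hm, hshortest m hm hmin⟩, rfl⟩, by rintro _ ⟨l, ⟨hl, -⟩, rfl⟩; exact hmin l hl⟩
  rw [hA.csInf_eq, hB.csInf_eq]

/-- Let `Γ'` be a finite connected metric graph (vertex type `V'`, edge
type `E'`, positive edge lengths `ℓ`), and `Γ` a connected subgraph given by vertex set
`Vs` and edge set `Es` (with the same lengths). If the first Betti numbers agree, i.e.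
`#E' − #V' = #Es − #Vs` (the cyclomatic numbers coincide), then every shortest path in `Γ'`
between two points of `Γ` is contained in `Γ`, and the shortest-path distance in `Γ'`
between points of `Γ` equals the shortest-path distance in `Γ`. -/
theorem subgraph_same_betti_isometric {V' E' : Type*} [Fintype V'] [Fintype E']
    (ends : E' → V' × V') (ℓ : E' → ℝ) (hpos : ∀ e, 0 < ℓ e)
    (Vs : Set V') (Es : Set E') (hVne : Vs.Nonempty)
    (hends : ∀ e ∈ Es, (ends e).1 ∈ Vs ∧ (ends e).2 ∈ Vs)
    (hconn' : ∀ u v : V', ∃ l, IsWalk ends u l v)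
    (hconn : ∀ u ∈ Vs, ∀ v ∈ Vs, ∃ l, IsWalk ends u l v ∧ ∀ e ∈ l, e ∈ Es)
    (hbetti : (Fintype.card E' : ℤ) - Fintype.card V' = (Es.ncard : ℤ) - Vs.ncard) :
    ∀ x ∈ Vs, ∀ y ∈ Vs,
      (∀ l, IsWalk ends x l y →
        (∀ l', IsWalk ends x l' y → walkCost ℓ l ≤ walkCost ℓ l') →
        ∀ e ∈ l, e ∈ Es) ∧
      sInf {c | ∃ l, IsWalk ends x l y ∧ walkCost ℓ l = c}
        = sInf {c | ∃ l, (IsWalk ends x l y ∧ ∀ e ∈ l, e ∈ Es) ∧ walkCost ℓ l = c} :=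
  subgraph_same_betti_isometric_general ends ℓ hpos Vs Es hends hconn' hbetti
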